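/- Two miners that are equidistant from the coordinator have the same individual efficiency, irrespective of their computational capacities. Precisely: let X_1,…,X_n be independent exponential random variables with rates h_1,…,h_n > 0 and shifts d_1,…,d_n ≥ 0, and suppose d_i = d_j for two indices i ≠ j. Then P( X_i + d_i ≤ X_k + d_k for all k ) / h_i = P( X_j + d_j ≤ X_k + d_k for all k ) / h_j; that is, p_i/h_i = p_j/h_j, so the individual efficiencies η_i^C = (p_i/τ̄)/h_i and η_j^C = (p_j/τ̄)/h_j are equal. -/

import Mathlib

open MeasureTheory ProbabilityTheory Real Set
open scoped ENNReal

/-! Integrate out every coordinate except those of miners `i` and `j`. With the others fixed,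
and since `d i = d j`, miner `i` wins iff `X i ≤ X j` and `X i` lies in a set `S` depending only
on the other coordinates, an event of probability `∫_S h_i e^{-h_i u} e^{-h_j u} du`.
Multiplied by `h_j`, this no longer distinguishes `i` from `j`. -/

lemma expMeasure_singleton (b u : ℝ) : expMeasure b {u} = 0 :=
  withDensity_absolutelyContinuous volume _ (measure_singleton u)

lemma expMeasure_Ici {b u : ℝ} (hb : 0 < b) (hu : 0 ≤ u) :
    expMeasure b (Ici u) = ENNReal.ofReal (exp (-(b * u))) := by
  have := isProbabilityMeasure_expMeasure hb
  rw [← measure_congr (Ioi_ae_eq_Ici' (expMeasure_singleton b u)), ← compl_Iic,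
    prob_compl_eq_one_sub measurableSet_Iic, ← ofReal_cdf, cdf_expMeasure_eq hb, if_pos hu,
    ← ENNReal.ofReal_one,
    ← ENNReal.ofReal_sub _ (sub_nonneg.2 (exp_le_one_iff.2 (by nlinarith)))]
  ring_nf

/-- For `u ≥ 0` both sides are `a b e^{-(a+b)u}`. -/
lemma ofReal_mul_exponentialPDF_mul_expMeasure_Ici_comm {a b : ℝ} (ha : 0 < a) (hb : 0 < b)
    (u : ℝ) :
    ENNReal.ofReal b * (exponentialPDF a u * expMeasure b (Ici u)) =
      ENNReal.ofReal a * (exponentialPDF b u * expMeasure a (Ici u)) := by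
  rcases lt_or_ge u 0 with hu | hu
  · simp [exponentialPDF_of_neg hu]
  rw [exponentialPDF_of_nonneg hu, exponentialPDF_of_nonneg hu, expMeasure_Ici ha hu,
    expMeasure_Ici hb hu]
  simp only [← ENNReal.ofReal_mul, ha.le, hb.le, (exp_pos _).le, mul_nonneg]
  ring_nf

lemma measurable_measure_Ici (ν : Measure ℝ) : Measurable fun u => ν (Ici u) :=
  Antitone.measurable fun _ _ h => measure_mono (Ici_subset_Ici.2 h)

lemma setLIntegral_expMeasure {r : ℝ} {f : ℝ → ℝ≥0∞} (hf : Measurable f) {S : Set ℝ}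
    (hS : MeasurableSet S) :
    ∫⁻ u in S, f u ∂expMeasure r = ∫⁻ u in S, exponentialPDF r u * f u :=
  setLIntegral_withDensity_eq_setLIntegral_mul _ (measurable_exponentialPDFReal r).ennreal_ofReal
    hf hS

lemma ofReal_mul_setLIntegral_expMeasure_Ici_comm {a b : ℝ} (ha : 0 < a) (hb : 0 < b)
    {S : Set ℝ} (hS : MeasurableSet S) :
    ENNReal.ofReal b * ∫⁻ u in S, expMeasure b (Ici u) ∂expMeasure a =
      ENNReal.ofReal a * ∫⁻ u in S, expMeasure a (Ici u) ∂expMeasure b := by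
  simp_rw [setLIntegral_expMeasure (measurable_measure_Ici _) hS,
    ← lintegral_const_mul' _ _ ENNReal.ofReal_ne_top,
    ofReal_mul_exponentialPDF_mul_expMeasure_Ici_comm ha hb]

lemma MeasureTheory.lmarginal_const_mul {δ : Type*} [DecidableEq δ] {X : δ → Type*}
    [∀ k, MeasurableSpace (X k)] (μ : ∀ k, Measure (X k)) (s : Finset δ)
    {f : (∀ k, X k) → ℝ≥0∞} (hf : Measurable f) (c : ℝ≥0∞) :
    ∫⋯∫⁻_s, (fun x => c * f x) ∂μ = fun x => c * (∫⋯∫⁻_s, f ∂μ) x := by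
  ext x
  exact lintegral_const_mul c (hf.comp measurable_updateFinset)

section WinSet

variable {ι : Type*} (d : ι → ℝ)

def winSet (i : ι) : Set (ι → ℝ) := {x | ∀ k, x i + d i ≤ x k + d k}

def beatsAllBut (i j : ι) (x : ι → ℝ) : Set ℝ :=
  {u | ∀ k, k ≠ i → k ≠ j → u + d i ≤ x k + d k}

variable {d}

lemma measurableSet_winSet [Countable ι] (i : ι) : MeasurableSet (winSet d i) := by
  simp only [winSet, ofPred_forall]
  exact MeasurableSet.iInter fun k => measurableSet_le (by fun_prop) (by fun_prop)

lemma measurableSet_beatsAllBut [Countable ι] (i j : ι) (x : ι → ℝ) :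
    MeasurableSet (beatsAllBut d i j x) := by
  simp only [beatsAllBut, ofPred_forall]
  exact MeasurableSet.iInter fun k => MeasurableSet.iInter fun _ => MeasurableSet.iInter fun _ =>
    measurableSet_le (by fun_prop) (by fun_prop)

lemma beatsAllBut_comm {i j : ι} (hd : d i = d j) (x : ι → ℝ) :
    beatsAllBut d j i x = beatsAllBut d i j x := by
  ext u
  simp only [beatsAllBut, mem_ofPred_eq, hd]
  exact forall_congr' fun k => imp.swap

variable [DecidableEq ι]

lemma update_update_mem_winSet_iff {i j : ι} (hij : i ≠ j) (hd : d i = d j) (x : ι → ℝ)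
    (u v : ℝ) :
    Function.update (Function.update x i u) j v ∈ winSet d i ↔
      u ≤ v ∧ u ∈ beatsAllBut d i j x := by
  simp only [winSet, beatsAllBut, mem_ofPred_eq]
  constructor
  · intro H
    refine ⟨by simpa [hij, hd] using H j, fun k hki hkj => by simpa [hij, hki, hkj] using H k⟩
  · rintro ⟨huv, hu⟩ k
    rcases eq_or_ne k i with rfl | hki
    · simp [hij]
    rcases eq_or_ne k j with rfl | hkj
    · simpa [hij, hd] using huv
    simpa [hij, hki, hkj] using hu k hki hkj

lemma lmarginal_pair_indicator_winSet [Countable ι] (ν : ι → Measure ℝ)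
    [∀ k, SigmaFinite (ν k)] {i j : ι} (hij : i ≠ j) (hd : d i = d j) (x : ι → ℝ) :
    (∫⋯∫⁻_{i, j}, (winSet d i).indicator 1 ∂ν) x =
      ∫⁻ u in beatsAllBut d i j x, ν j (Ici u) ∂ν i := by
  classical
  have inner : ∀ u,
      ∫⁻ v, (winSet d i).indicator 1 (Function.update (Function.update x i u) j v) ∂ν j =
        (beatsAllBut d i j x).indicator (fun u => ν j (Ici u)) u := by
    intro u
    by_cases hu : u ∈ beatsAllBut d i j x
    · rw [indicator_of_mem hu, ← lintegral_indicator_one measurableSet_Ici]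
      refine lintegral_congr fun v => ?_
      simp only [indicator_apply, update_update_mem_winSet_iff hij hd, hu, and_true, mem_Ici,
        Pi.one_apply]
    · simp only [indicator_apply, update_update_mem_winSet_iff hij hd, hu, and_false,
        if_false, lintegral_zero]
  rw [lmarginal_insert _ (measurable_one.indicator (measurableSet_winSet i)) (by simpa using hij)]
  simp only [lmarginal_singleton, inner]
  exact lintegral_indicator (measurableSet_beatsAllBut i j x) _

lemma ofReal_mul_pi_expMeasure_winSet_comm [Fintype ι] {h : ι → ℝ} (hh : ∀ k, 0 < h k)
    {i j : ι} (hij : i ≠ j) (hd : d i = d j) :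
    ENNReal.ofReal (h j) * Measure.pi (fun k => expMeasure (h k)) (winSet d i) =
      ENNReal.ofReal (h i) * Measure.pi (fun k => expMeasure (h k)) (winSet d j) := by
  have := fun k => isProbabilityMeasure_expMeasure (hh k)
  have hA : ∀ l, Measurable ((winSet d l).indicator (1 : (ι → ℝ) → ℝ≥0∞)) :=
    fun l => measurable_one.indicator (measurableSet_winSet l)
  simp_rw [← lintegral_indicator_one (measurableSet_winSet _), ← lintegral_const_mul _ (hA _)]
  refine lintegral_eq_of_lmarginal_eq {i, j} ((hA i).const_mul _) ((hA j).const_mul _) ?_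
  rw [lmarginal_const_mul _ _ (hA i), lmarginal_const_mul _ _ (hA j)]
  ext x
  rw [lmarginal_pair_indicator_winSet _ hij hd, Finset.pair_comm,
    lmarginal_pair_indicator_winSet _ hij.symm hd.symm, beatsAllBut_comm hd]
  exact ofReal_mul_setLIntegral_expMeasure_Ici_comm (hh i) (hh j)
    (measurableSet_beatsAllBut i j x)

end WinSet

theorem equidistant_miners_equal_efficiency_general
    {Ω : Type*} [MeasurableSpace Ω] (μ : Measure Ω)
    (n : ℕ) (h d : Fin n → ℝ)
    (hh : ∀ k, 0 < h k)
    (X : Fin n → Ω → ℝ) (hXm : ∀ k, Measurable (X k))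
    (hindep : iIndepFun X μ)
    (hlaw : ∀ k, μ.map (X k) = expMeasure (h k))
    (i j : Fin n) (hij : i ≠ j) (hdij : d i = d j) :
    (μ {ω | ∀ k : Fin n, X i ω + d i ≤ X k ω + d k}).toReal / h i =
      (μ {ω | ∀ k : Fin n, X j ω + d j ≤ X k ω + d k}).toReal / h j := by
  have hlawVec : μ.map (fun ω k => X k ω) = Measure.pi fun k => expMeasure (h k) := by
    simp_rw [hindep.map_fun_eq_pi_map fun k => (hXm k).aemeasurable, hlaw]
  have hwin : ∀ l, μ {ω | ∀ k, X l ω + d l ≤ X k ω + d k} =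
      Measure.pi (fun k => expMeasure (h k)) (winSet d l) := fun l => by
    rw [← hlawVec, Measure.map_apply (measurable_pi_lambda _ hXm) (measurableSet_winSet l)]
    rfl
  have key := congrArg ENNReal.toReal (ofReal_mul_pi_expMeasure_winSet_comm hh hij hdij)
  rw [ENNReal.toReal_mul, ENNReal.toReal_mul, ENNReal.toReal_ofReal (hh j).le,
    ENNReal.toReal_ofReal (hh i).le, ← hwin, ← hwin] at key
  rw [div_eq_div_iff (hh i).ne' (hh j).ne']
  linarith

/-- **Equidistant miners have equal individual efficiency (Corollary 6).**
If `X 0, …, X (n-1)` are independent exponential random variables with rates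
`h 0, …, h (n-1) > 0` and nonnegative shifts `d`, and two indices `i ≠ j` satisfy
`d i = d j`, then `p i / h i = p j / h j`, where `p i` is the probability that
`X i + d i ≤ X k + d k` for all `k`; hence the individual efficiencies
`η_i = (p i/τ̄)/h i` and `η_j = (p j/τ̄)/h j` coincide, irrespective of the
capacities. -/
theorem equidistant_miners_equal_efficiency
    {Ω : Type*} [MeasurableSpace Ω] (μ : Measure Ω) [IsProbabilityMeasure μ]
    (n : ℕ) (h d : Fin n → ℝ)
    (hh : ∀ k, 0 < h k) (hd : ∀ k, 0 ≤ d k)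
    (X : Fin n → Ω → ℝ) (hXm : ∀ k, Measurable (X k))
    (hindep : iIndepFun X μ)
    (hlaw : ∀ k, μ.map (X k) = expMeasure (h k))
    (i j : Fin n) (hij : i ≠ j) (hdij : d i = d j) :
    (μ {ω | ∀ k : Fin n, X i ω + d i ≤ X k ω + d k}).toReal / h i =
      (μ {ω | ∀ k : Fin n, X j ω + d j ≤ X k ω + d k}).toReal / h j :=
  equidistant_miners_equal_efficiency_general μ n h d hh X hXm hindep hlaw i j hij hdij
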